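/- arXiv:2203.15378 — 4 statements merged into one kernel-verified Lean document; each statement's English description precedes it below -/
import Mathlib

section
/- For z ≠ 0 and |q| < 1, the Jacobi triple product identity holds: ∑_{n=-∞}^{∞} z^n q^{n^2} = ∏_{n=0}^{∞} (1 - q^{2n+2})(1 + z q^{2n+1})(1 + z^{-1} q^{2n+1}). -/
/-!
With `t = q²` and `x = z q^{1-2N}`, the factors of `∏_{i<2N} (1 + x tⁱ)` are `1 + z q^{±(2j+1)}`,
so the `q`-binomial theorem gives the finite identity
`∏_{j<N} (1 + z q^{2j+1}) (1 + z⁻¹ q^{2j+1}) = ∑_{|m| ≤ N} [2N, N+m]_t zᵐ q^{m²}`.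
Multiplied by `(t; t)_N`, this expresses the `N`-th partial product of the right-hand side as
`∑_{|m| ≤ N} c_N(m) zᵐ q^{m²}` with `c_N(m) = (t;t)_N (t;t)_{2N} / ((t;t)_{N+m} (t;t)_{N-m})`.
Since `(t; t)_n` converges to a nonzero limit, the `c_N(m)` are uniformly bounded and tend to `1`,
and Tannery's theorem lets `N → ∞` termwise.
-/

open Finset Filter Topology

section GaussianBinomial

variable {R : Type*} [CommRing R]

/-- The `q`-Pochhammer symbol `(t; t)ₙ`. -/
def qPochhammer (t : R) (n : ℕ) : R := ∏ j ∈ range n, (1 - t ^ (j + 1))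

def gaussBinom (t : R) : ℕ → ℕ → R
  | _, 0 => 1
  | 0, _ + 1 => 0
  | n + 1, k + 1 => gaussBinom t n k + t ^ (k + 1) * gaussBinom t n (k + 1)

@[simp] theorem qPochhammer_zero (t : R) : qPochhammer t 0 = 1 := prod_range_zero _

theorem qPochhammer_succ (t : R) (n : ℕ) :
    qPochhammer t (n + 1) = qPochhammer t n * (1 - t ^ (n + 1)) :=
  prod_range_succ _ _

@[simp] theorem gaussBinom_zero_right (t : R) (n : ℕ) : gaussBinom t n 0 = 1 := by
  cases n <;> rfl

theorem gaussBinom_succ_succ (t : R) (n k : ℕ) :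
    gaussBinom t (n + 1) (k + 1) = gaussBinom t n k + t ^ (k + 1) * gaussBinom t n (k + 1) :=
  rfl

theorem gaussBinom_eq_zero_of_lt (t : R) : ∀ {n k : ℕ}, n < k → gaussBinom t n k = 0
  | 0, _ + 1, _ => rfl
  | _ + 1, _ + 1, h => by
    rw [gaussBinom_succ_succ, gaussBinom_eq_zero_of_lt t (by omega),
      gaussBinom_eq_zero_of_lt t (by omega), mul_zero, add_zero]

@[simp] theorem gaussBinom_self (t : R) : ∀ n : ℕ, gaussBinom t n n = 1
  | 0 => rfl
  | n + 1 => by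
    rw [gaussBinom_succ_succ, gaussBinom_self t n, gaussBinom_eq_zero_of_lt t n.lt_succ_self,
      mul_zero, add_zero]

/-- The `q`-binomial theorem. -/
theorem prod_one_add_mul_pow_eq_sum_gaussBinom (t x : R) (n : ℕ) :
    ∏ j ∈ range n, (1 + x * t ^ j) =
      ∑ k ∈ range (n + 1), gaussBinom t n k * t ^ k.choose 2 * x ^ k := by
  induction n generalizing x with
  | zero => simp
  | succ n ih =>
    have h_choose (k : ℕ) : (k + 1).choose 2 = k.choose 2 + k := by
      rw [Nat.choose_succ_succ', Nat.choose_one_right, add_comm]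
    have h_sum : ∑ k ∈ range (n + 1), gaussBinom t n k * t ^ k.choose 2 * (x * t) ^ k =
        ∑ k ∈ range (n + 1), t ^ (k + 1) * gaussBinom t n (k + 1) * t ^ (k + 1).choose 2 *
          x ^ (k + 1) + 1 := by
      rw [sum_range_succ', sum_range_succ _ n, gaussBinom_eq_zero_of_lt t n.lt_succ_self]
      simp only [mul_zero, zero_mul, add_zero, gaussBinom_zero_right, Nat.choose_zero_succ,
        pow_zero, mul_one]
      exact congrArg (· + 1) (sum_congr rfl fun k _ => by rw [h_choose]; ring)
    have h_mul_x : (∑ k ∈ range (n + 1), gaussBinom t n k * t ^ k.choose 2 * (x * t) ^ k) * x =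
        ∑ k ∈ range (n + 1), gaussBinom t n k * t ^ (k + 1).choose 2 * x ^ (k + 1) := by
      rw [sum_mul]
      exact sum_congr rfl fun k _ => by rw [h_choose]; ring
    rw [prod_range_succ', sum_range_succ' _ (n + 1)]
    simp_rw [pow_succ' t, ← mul_assoc, ih, pow_zero, mul_one, mul_add, mul_one, h_mul_x,
      gaussBinom_succ_succ, add_mul, sum_add_distrib, h_sum, gaussBinom_zero_right,
      Nat.choose_zero_succ, pow_zero, mul_one]
    ring

theorem gaussBinom_add_mul_qPochhammer (t : R) (k l : ℕ) :
    gaussBinom t (k + l) k * qPochhammer t k * qPochhammer t l = qPochhammer t (k + l) := by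
  induction k generalizing l with
  | zero => simp
  | succ k ihk =>
    induction l with
    | zero => simp
    | succ l ihl =>
      have ihk_succ := ihk (l + 1)
      rw [show k + 1 + l = k + (l + 1) by omega, ← ihk_succ] at ihl
      rw [show k + 1 + (l + 1) = k + (l + 1) + 1 by omega, gaussBinom_succ_succ,
        qPochhammer_succ t (k + (l + 1)), ← ihk_succ]
      simp only [qPochhammer_succ] at ihl ⊢
      linear_combination t ^ (k + 1) * (1 - t ^ (l + 1)) * ihl

end GaussianBinomial

section FiniteProduct

variable {K : Type*} [Field K]

theorem gaussBinom_add_eq_div {t : K} (ht : ∀ n, qPochhammer t n ≠ 0) (k l : ℕ) :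
    gaussBinom t (k + l) k = qPochhammer t (k + l) / (qPochhammer t k * qPochhammer t l) := by
  rw [eq_div_iff (mul_ne_zero (ht k) (ht l)), ← mul_assoc, gaussBinom_add_mul_qPochhammer]

theorem prod_range_two_mul_one_add_mul_pow {q z : K} (hq : q ≠ 0) (hz : z ≠ 0) (N : ℕ) :
    ∏ i ∈ range (2 * N), (1 + z * q / (q ^ 2) ^ N * (q ^ 2) ^ i) =
      z ^ N / q ^ (N ^ 2) *
        ∏ j ∈ range N, (1 + z * q ^ (2 * j + 1)) * (1 + z⁻¹ * q ^ (2 * j + 1)) := by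
  have h_odd : ∑ j ∈ range N, (2 * j + 1) = N ^ 2 := by
    induction N with
    | zero => rfl
    | succ N ih => rw [sum_range_succ, ih]; ring
  have h_low : ∏ i ∈ range N, (1 + z * q / (q ^ 2) ^ N * (q ^ 2) ^ i) =
      z ^ N / q ^ (N ^ 2) * ∏ j ∈ range N, (1 + z⁻¹ * q ^ (2 * j + 1)) := by
    have h_pref : z ^ N / q ^ (N ^ 2) = ∏ j ∈ range N, z / q ^ (2 * j + 1) := by
      rw [prod_div_distrib, prod_const, card_range, prod_pow_eq_pow_sum, h_odd]
    rw [h_pref, ← prod_mul_distrib, ← prod_range_reflect]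
    refine prod_congr rfl fun i hi => ?_
    obtain ⟨d, rfl⟩ : ∃ d, N = d + i + 1 := ⟨N - 1 - i, by rw [mem_range] at hi; omega⟩
    rw [show d + i + 1 - 1 - i = d by omega]
    field_simp
    ring
  have h_high : ∏ i ∈ range N, (1 + z * q / (q ^ 2) ^ N * (q ^ 2) ^ (N + i)) =
      ∏ j ∈ range N, (1 + z * q ^ (2 * j + 1)) :=
    prod_congr rfl fun i _ => by field_simp; ring
  rw [two_mul, prod_range_add, h_low, h_high, prod_mul_distrib]
  ring

theorem sum_range_two_mul_add_one_sub_eq_sum_Icc {M : Type*} [AddCommMonoid M] (f : ℤ → M)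
    (N : ℕ) : ∑ k ∈ range (2 * N + 1), f (k - N) = ∑ m ∈ Icc (-N : ℤ) N, f m := by
  refine sum_nbij' (fun k => (k : ℤ) - N) (fun m => (N + m).toNat) ?_ ?_ ?_ ?_ ?_ <;>
    intro a ha <;> simp only [mem_Icc, mem_range] at ha ⊢
  all_goals omega

theorem jacobi_triple_product_finite {q z : K} (hq : q ≠ 0) (hz : z ≠ 0) (N : ℕ) :
    ∏ j ∈ range N, (1 + z * q ^ (2 * j + 1)) * (1 + z⁻¹ * q ^ (2 * j + 1)) =
      ∑ m ∈ Icc (-N : ℤ) N, gaussBinom (q ^ 2) (2 * N) (N + m).toNat * (z ^ m * q ^ (m ^ 2)) := by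
  have h_sq (k : ℕ) : 2 * k.choose 2 + k = k ^ 2 := by
    induction k with
    | zero => rfl
    | succ k ih => rw [Nat.choose_succ_succ', Nat.choose_one_right]; nlinarith
  have h_term (k : ℕ) : gaussBinom (q ^ 2) (2 * N) k * (q ^ 2) ^ k.choose 2 *
      (z * q / (q ^ 2) ^ N) ^ k / (z ^ N / q ^ (N ^ 2)) =
        gaussBinom (q ^ 2) (2 * N) k * (z ^ ((k : ℤ) - N) * q ^ (((k : ℤ) - N) ^ 2)) := by
    have h_exp : ((k : ℤ) - N) ^ 2 = ((k ^ 2 + N ^ 2 : ℕ) : ℤ) - ((2 * N * k : ℕ) : ℤ) := by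
      push_cast; ring
    rw [zpow_sub₀ hz, h_exp, zpow_sub₀ hq, zpow_natCast, zpow_natCast, zpow_natCast,
      zpow_natCast, ← h_sq k]
    simp only [div_pow, mul_pow, ← pow_mul]
    field_simp
    ring
  have h_pref : z ^ N / q ^ (N ^ 2) ≠ 0 := div_ne_zero (pow_ne_zero N hz) (pow_ne_zero _ hq)
  rw [← mul_div_cancel_left₀ (∏ j ∈ range N, _) h_pref,
    ← prod_range_two_mul_one_add_mul_pow hq hz, prod_one_add_mul_pow_eq_sum_gaussBinom, sum_div,
    ← sum_range_two_mul_add_one_sub_eq_sum_Icc]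
  refine sum_congr rfl fun k _ => ?_
  rw [h_term, show ((N : ℤ) + (k - N)).toNat = k by omega]

theorem prod_range_jacobi_factor_eq_sum {q z : K} (hq : q ≠ 0) (hz : z ≠ 0)
    (ht : ∀ n, qPochhammer (q ^ 2) n ≠ 0) (N : ℕ) :
    ∏ n ∈ range N,
        (1 - q ^ (2 * n + 2)) * (1 + z * q ^ (2 * n + 1)) * (1 + z⁻¹ * q ^ (2 * n + 1)) =
      ∑ m ∈ Icc (-N : ℤ) N, qPochhammer (q ^ 2) N * qPochhammer (q ^ 2) (2 * N) /
        (qPochhammer (q ^ 2) (N + m).toNat * qPochhammer (q ^ 2) (N - m).toNat) *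
          (z ^ m * q ^ (m ^ 2)) := by
  have h_factor (n : ℕ) : (1 - q ^ (2 * n + 2)) * (1 + z * q ^ (2 * n + 1)) *
      (1 + z⁻¹ * q ^ (2 * n + 1)) = (1 - (q ^ 2) ^ (n + 1)) *
        ((1 + z * q ^ (2 * n + 1)) * (1 + z⁻¹ * q ^ (2 * n + 1))) := by ring
  rw [prod_congr rfl fun n _ => h_factor n, prod_mul_distrib, ← qPochhammer,
    jacobi_triple_product_finite hq hz, mul_sum]
  refine sum_congr rfl fun m hm => ?_
  rw [mem_Icc] at hm
  rw [show 2 * N = (N + m).toNat + (N - m).toNat by omega, gaussBinom_add_eq_div ht]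
  ring

end FiniteProduct

section Limits

variable {K : Type*} [NormedField K]

theorem summable_norm_neg_pow_succ {t : K} (ht : ‖t‖ < 1) :
    Summable fun j : ℕ => ‖-t ^ (j + 1)‖ := by
  simp_rw [norm_neg, norm_pow]
  exact (summable_nat_add_iff 1).2 (summable_geometric_of_lt_one (norm_nonneg t) ht)

theorem qPochhammer_ne_zero {t : K} (ht : ‖t‖ < 1) (n : ℕ) : qPochhammer t n ≠ 0 :=
  prod_ne_zero_iff.2 fun j _ h => by
    have h_norm : ‖t ^ (j + 1)‖ < 1 := by
      rw [norm_pow]; exact pow_lt_one₀ (norm_nonneg t) ht j.succ_ne_zero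
    rw [← sub_eq_zero.1 h, norm_one] at h_norm
    exact lt_irrefl _ h_norm

theorem tendsto_qPochhammer [CompleteSpace K] {t : K} (ht : ‖t‖ < 1) :
    Tendsto (qPochhammer t) atTop (𝓝 (∏' j : ℕ, (1 - t ^ (j + 1)))) := by
  have h_mult := multipliable_one_add_of_summable (f := fun j => -t ^ (j + 1))
    (summable_norm_neg_pow_succ ht)
  unfold qPochhammer
  simp_rw [sub_eq_add_neg]
  exact h_mult.hasProd.tendsto_prod_nat

theorem tprod_one_sub_pow_succ_ne_zero [CompleteSpace K] {t : K} (ht : ‖t‖ < 1) :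
    ∏' j : ℕ, (1 - t ^ (j + 1)) ≠ 0 := by
  simp_rw [sub_eq_add_neg]
  refine tprod_one_add_ne_zero_of_summable (fun j => ?_) (summable_norm_neg_pow_succ ht)
  rw [← sub_eq_add_neg]
  exact prod_ne_zero_iff.1 (qPochhammer_ne_zero ht (j + 1)) j (self_mem_range_succ j)

theorem tendsto_mul_div_mul_toNat {u : ℕ → K} {a : K} (hu : Tendsto u atTop (𝓝 a)) (ha : a ≠ 0)
    (m : ℤ) :
    Tendsto (fun N : ℕ => u N * u (2 * N) / (u (N + m).toNat * u (N - m).toNat)) atTop (𝓝 1) := by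
  have h_shift (s : ℤ) : Tendsto (fun N : ℕ => (N + s).toNat) atTop atTop :=
    tendsto_atTop_atTop.2 fun b => ⟨b + s.natAbs, fun N hN => by omega⟩
  have h_lim := (hu.mul (hu.comp (tendsto_id.const_mul_atTop' two_pos))).div
    ((hu.comp (h_shift m)).mul (hu.comp (h_shift (-m)))) (mul_ne_zero ha ha)
  rw [div_self (mul_ne_zero ha ha)] at h_lim
  simpa only [sub_eq_add_neg, Function.comp_def, id, Pi.div_def] using h_lim

theorem exists_norm_mul_div_mul_toNat_le {u : ℕ → K} {a : K} (hu : Tendsto u atTop (𝓝 a))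
    (ha : a ≠ 0) :
    ∃ C, ∀ (N : ℕ) (m : ℤ), ‖u N * u (2 * N) / (u (N + m).toNat * u (N - m).toNat)‖ ≤ C := by
  obtain ⟨A, hA⟩ := hu.norm.bddAbove_range
  obtain ⟨B, hB⟩ := (hu.inv₀ ha).norm.bddAbove_range
  simp only [mem_upperBounds, Set.mem_range, forall_exists_index, forall_apply_eq_imp_iff]
    at hA hB
  refine ⟨A * A * (B * B), fun N m => ?_⟩
  rw [div_eq_mul_inv, mul_inv, norm_mul, norm_mul, norm_mul]
  have hA₀ : 0 ≤ A := (norm_nonneg _).trans (hA 0)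
  have hB₀ : 0 ≤ B := (norm_nonneg _).trans (hB 0)
  gcongr
  exacts [hA _, hA _, hB _, hB _]

theorem tendsto_sum_Icc_mul_of_tendsto_one [CompleteSpace K] {c : ℕ → ℤ → K} {a : ℤ → K}
    {C : ℝ} (ha : Summable fun m => ‖a m‖) (hc : ∀ m, Tendsto (c · m) atTop (𝓝 1))
    (hC : ∀ N m, ‖c N m‖ ≤ C) :
    Tendsto (fun N : ℕ => ∑ m ∈ Icc (-N : ℤ) N, c N m * a m) atTop (𝓝 (∑' m, a m)) := by
  refine (tendsto_tsum_of_dominated_convergence (ha.mul_left C) (fun m => ?_)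
    (Eventually.of_forall fun N m => ?_)).congr fun N => (sum_eq_tsum_indicator _ _).symm
  · have h_mem : ∀ᶠ N : ℕ in atTop, m ∈ Icc (-N : ℤ) N :=
      eventually_atTop.2 ⟨m.natAbs, fun N hN => by rw [mem_Icc]; omega⟩
    refine ((hc m).mul_const (a m)).congr' (h_mem.mono fun N hN => ?_) |>.trans (by rw [one_mul])
    rw [Set.indicator_of_mem (mem_coe.2 hN)]
  · by_cases hm : m ∈ (Icc (-N : ℤ) N : Set ℤ)
    · rw [Set.indicator_of_mem hm, norm_mul]
      exact mul_le_mul_of_nonneg_right (hC N m) (norm_nonneg _)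
    · rw [Set.indicator_of_notMem hm, norm_zero]
      exact mul_nonneg ((norm_nonneg _).trans (hC 0 0)) (norm_nonneg _)

theorem summable_norm_pow_mul_pow_sq {r : ℝ} (hr₀ : 0 ≤ r) (hr : r < 1) (w : ℝ) :
    Summable fun n : ℕ => ‖w ^ n * r ^ (n ^ 2)‖ := by
  have h_small : ∀ᶠ n : ℕ in atTop, ‖w * r ^ n‖ ≤ 2⁻¹ := by
    have h_lim := (tendsto_pow_atTop_nhds_zero_of_lt_one hr₀ hr).const_mul w
    rw [mul_zero] at h_lim
    exact h_lim.norm.eventually (ge_mem_nhds (by norm_num))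
  refine .of_norm_bounded_eventually_nat
    (summable_geometric_of_lt_one (by norm_num) (by norm_num : (2 : ℝ)⁻¹ < 1)) ?_
  filter_upwards [h_small] with n hn
  rw [norm_norm, sq, pow_mul, ← mul_pow, norm_pow]
  exact pow_le_pow_left₀ (norm_nonneg _) hn n

theorem summable_norm_zpow_mul_zpow_sq {q : K} (hq : ‖q‖ < 1) (z : K) :
    Summable fun m : ℤ => ‖z ^ m * q ^ (m ^ 2)‖ := by
  have h_nat (w : K) : Summable fun n : ℕ => ‖w ^ n * q ^ (n ^ 2)‖ := by
    simpa only [norm_mul, norm_pow, norm_norm] using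
      summable_norm_pow_mul_pow_sq (norm_nonneg q) hq ‖w‖
  refine .of_nat_of_neg ?_ ?_
  · simpa only [zpow_natCast, ← Nat.cast_pow] using h_nat z
  · simpa only [neg_sq, zpow_neg, ← Nat.cast_pow, zpow_natCast, ← inv_pow] using h_nat z⁻¹

theorem multipliable_one_add_mul_pow_two_mul_add [CompleteSpace K] {q : K} (hq : ‖q‖ < 1)
    (c : K) (b : ℕ) : Multipliable fun n : ℕ => 1 + c * q ^ (2 * n + b) := by
  have hq₂ : ‖q‖ ^ 2 < 1 := pow_lt_one₀ (norm_nonneg q) hq two_ne_zero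
  refine multipliable_one_add_of_summable
    (((summable_geometric_of_lt_one (sq_nonneg ‖q‖) hq₂).mul_left (‖c‖ * ‖q‖ ^ b)).congr
      fun n => ?_)
  rw [norm_mul, norm_pow, pow_add, pow_mul]
  ring

end Limits

/-- Jacobi's triple product: for `z ≠ 0` and `|q| < 1`,
`∑_{n=-∞}^{∞} zⁿ q^{n²} = ∏_{n≥0} (1 - q^{2n+2})(1 + z q^{2n+1})(1 + z⁻¹ q^{2n+1})`. -/
theorem jacobi_triple_product (z q : ℂ) (hz : z ≠ 0) (hq : ‖q‖ < 1) :
    ∑' n : ℤ, z ^ n * q ^ (n ^ 2) =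
      ∏' n : ℕ, (1 - q ^ (2 * n + 2)) * (1 + z * q ^ (2 * n + 1)) *
        (1 + z⁻¹ * q ^ (2 * n + 1)) := by
  rcases eq_or_ne q 0 with rfl | hq₀
  · simp [zero_zpow_eq]
  have ht : ‖q ^ 2‖ < 1 := by
    rw [norm_pow]
    exact pow_lt_one₀ (norm_nonneg q) hq two_ne_zero
  have h_mult : Multipliable fun n : ℕ => (1 - q ^ (2 * n + 2)) * (1 + z * q ^ (2 * n + 1)) *
      (1 + z⁻¹ * q ^ (2 * n + 1)) := by
    simpa [← sub_eq_add_neg] using ((multipliable_one_add_mul_pow_two_mul_add hq (-1) 2).mul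
      (multipliable_one_add_mul_pow_two_mul_add hq z 1)).mul
        (multipliable_one_add_mul_pow_two_mul_add hq z⁻¹ 1)
  have hu := tendsto_qPochhammer ht
  have hu₀ := tprod_one_sub_pow_succ_ne_zero ht
  obtain ⟨C, hC⟩ := exists_norm_mul_div_mul_toNat_le hu hu₀
  refine tendsto_nhds_unique ?_ h_mult.hasProd.tendsto_prod_nat
  refine (tendsto_sum_Icc_mul_of_tendsto_one (summable_norm_zpow_mul_zpow_sq hq z)
    (tendsto_mul_div_mul_toNat hu hu₀) hC).congr fun N => ?_
  exact (prod_range_jacobi_factor_eq_sum hq₀ hz (qPochhammer_ne_zero ht) N).symm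
end

section
/- The generating function R₁(x) = ∑_{m,n ≥ 0} r₁(m,n) x^m q^n for 2-colored Rogers-Ramanujan partitions counted by number of parts m and size n satisfies the functional equation R₁(x) - R₂(x) = x q R₁(x q) + x q R₂(x q), where R₂ is the analogous generating function restricted to partitions with smallest part at least 2. -/
/-!
Comparing coefficients of `xᵐ qⁿ`, `r₁(m,n) - r₂(m,n)` counts the partitions having `1` as a
part, black or red. If `1` is black, deleting it and lowering every other part by one is a
bijection onto the partitions of `n - m` into `m - 1` parts with black parts `≥ 2` and red parts
`≥ 1` (red parts were `≥ 2`, since `1` was black); a red `1` is handled by swapping colours.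
Writing `r_{a,b}` for the count with black parts `≥ a` and red parts `≥ b`, colour symmetry gives
`r_{2,1} = r_{1,2}`, and inclusion–exclusion on where a part `1` can sit gives
`r_{2,1} + r_{1,2} = r_{1,1} + r_{2,2}`, so both cases together contribute
`r₁(m-1, n-m) + r₂(m-1, n-m)`.
-/

/-- A valid single-color part set of a 2-colored Rogers-Ramanujan partition:
all parts positive and any two distinct parts differ by at least 2. -/
def IsRRColor (A : Finset ℕ) : Prop :=
  (∀ a ∈ A, 1 ≤ a) ∧ ∀ a ∈ A, ∀ b ∈ A, a ≠ b → 2 ≤ max a b - min a b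

/-- A 2-colored Rogers-Ramanujan partition: a pair of part sets (black, red),
each a valid color class, with no common part. -/
def TwoColoredRR (p : Finset ℕ × Finset ℕ) : Prop :=
  IsRRColor p.1 ∧ IsRRColor p.2 ∧ Disjoint p.1 p.2

/-- `r j m n`: the number of 2-colored Rogers-Ramanujan partitions of `n` with
`m` parts in total, all parts at least `j`. -/
noncomputable def rRR (j m n : ℕ) : ℕ :=
  Nat.card {p : Finset ℕ × Finset ℕ // TwoColoredRR p ∧ (∀ a ∈ p.1 ∪ p.2, j ≤ a) ∧
    p.1.card + p.2.card = m ∧ p.1.sum id + p.2.sum id = n}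

/-- The two-variable generating function `R_j(x) = ∑ r_j(m,n) xᵐ qⁿ`, as a formal
power series in the variables `x` (index 0) and `q` (index 1). -/
noncomputable def Rgen (j : ℕ) : MvPowerSeries (Fin 2) ℤ :=
  fun e => (rRR j (e 0) (e 1) : ℤ)

/-- The series `R_j(xq)`, i.e. the result of substituting `x ↦ xq` in `R_j(x)`:
its coefficient of `xᵐ qⁿ` is `r_j(m, n-m)` (and `0` if `n < m`). -/
noncomputable def RgenShift (j : ℕ) : MvPowerSeries (Fin 2) ℤ :=
  fun e => if e 0 ≤ e 1 then (rRR j (e 0) (e 1 - e 0) : ℤ) else 0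

open Finset

def IsRRColorFrom (k : ℕ) (A : Finset ℕ) : Prop :=
  (∀ a ∈ A, k ≤ a) ∧ ∀ a ∈ A, ∀ b ∈ A, a ≠ b → 2 ≤ max a b - min a b

section IsRRColorFrom

variable {k : ℕ} {A : Finset ℕ}

lemma isRRColorFrom_iff_isRRColor (hk : 1 ≤ k) :
    IsRRColorFrom k A ↔ IsRRColor A ∧ ∀ a ∈ A, k ≤ a :=
  ⟨fun h => ⟨⟨fun a ha => hk.trans (h.1 a ha), h.2⟩, h.1⟩, fun h => ⟨h.2, h.1.2⟩⟩

lemma isRRColorFrom_succ_iff : IsRRColorFrom (k + 1) A ↔ IsRRColorFrom k A ∧ k ∉ A := by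
  refine ⟨fun h => ⟨⟨fun a ha => (Nat.le_succ k).trans (h.1 a ha), h.2⟩,
    fun hk => (h.1 k hk).not_gt (Nat.lt_succ_self k)⟩, fun ⟨h, hk⟩ => ⟨fun a ha => ?_, h.2⟩⟩
  exact lt_of_le_of_ne (h.1 a ha) (fun e => hk (e ▸ ha))

lemma isRRColorFrom_insert_iff (hk : k ∉ A) :
    IsRRColorFrom k (insert k A) ↔ IsRRColorFrom (k + 2) A := by
  simp only [IsRRColorFrom, forall_mem_insert]
  constructor
  · rintro ⟨⟨-, hA⟩, -, hgap⟩
    refine ⟨fun a ha => ?_, fun a ha b hb hab => (hgap a ha).2 b hb hab⟩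
    have := (hgap a ha).1 (fun e => hk (e ▸ ha))
    have := hA a ha
    omega
  · rintro ⟨hA, hgap⟩
    refine ⟨⟨le_rfl, fun a ha => by have := hA a ha; omega⟩,
      ⟨fun _ => by omega, fun a ha _ => by have := hA a ha; omega⟩,
      fun a ha => ⟨fun _ => by have := hA a ha; omega, hgap a ha⟩⟩

lemma isRRColorFrom_map_succ_iff :
    IsRRColorFrom (k + 1) (A.map (addRightEmbedding 1)) ↔ IsRRColorFrom k A := by
  simp only [IsRRColorFrom, forall_mem_map, addRightEmbedding_apply]
  refine and_congr (forall₂_congr fun a _ => by omega)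
    (forall₂_congr fun a _ => forall₂_congr fun b _ => by omega)

lemma IsRRColorFrom.notMem_of_lt {j : ℕ} (h : IsRRColorFrom k A) (hj : j < k) : j ∉ A :=
  fun hjA => (h.1 j hjA).not_gt hj

lemma IsRRColorFrom.mul_card_le_sum (h : IsRRColorFrom k A) : k * A.card ≤ A.sum id := by
  simpa [mul_comm] using card_nsmul_le_sum A id k h.1

end IsRRColorFrom

lemma exists_map_succ_eq {s : Finset ℕ} (hs : 0 ∉ s) :
    ∃ t : Finset ℕ, t.map (addRightEmbedding 1) = s := by
  have hpred : ∀ x ∈ s, x - 1 + 1 = x := fun x hx =>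
    Nat.sub_add_cancel (Nat.one_le_iff_ne_zero.mpr fun h => hs (h ▸ hx))
  refine ⟨s.image (· - 1), ext fun x => ?_⟩
  simp only [mem_map, mem_image, addRightEmbedding_apply]
  constructor
  · rintro ⟨_, ⟨y, hy, rfl⟩, rfl⟩
    rwa [hpred y hy]
  · exact fun hx => ⟨x - 1, ⟨x, hx, rfl⟩, hpred x hx⟩

lemma one_mem_map_succ_iff {s : Finset ℕ} : 1 ∈ s.map (addRightEmbedding 1) ↔ 0 ∈ s :=
  mem_map' (addRightEmbedding 1)

lemma sum_map_succ (A : Finset ℕ) :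
    (A.map (addRightEmbedding 1)).sum id = A.sum id + A.card := by
  simp [sum_map, sum_add_distrib]

def IsRRPair (a b m n : ℕ) (p : Finset ℕ × Finset ℕ) : Prop :=
  IsRRColorFrom a p.1 ∧ IsRRColorFrom b p.2 ∧ Disjoint p.1 p.2 ∧
    p.1.card + p.2.card = m ∧ p.1.sum id + p.2.sum id = n

open scoped Classical in
noncomputable def rrPairs (a b m n : ℕ) : Finset (Finset ℕ × Finset ℕ) :=
  ((range (n + 1)).powerset ×ˢ (range (n + 1)).powerset).filter (IsRRPair a b m n)

section rrPairs

variable {a b m n : ℕ} {p : Finset ℕ × Finset ℕ}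

lemma mem_rrPairs : p ∈ rrPairs a b m n ↔ IsRRPair a b m n p := by
  classical
  refine ⟨fun h => (mem_filter.mp h).2, fun h => mem_filter.mpr ⟨?_, h⟩⟩
  have hle : ∀ s : Finset ℕ, s.sum id ≤ n → s ∈ (range (n + 1)).powerset := fun s hs =>
    mem_powerset.mpr fun x hx => mem_range.mpr
      (Nat.lt_succ_of_le ((single_le_sum (f := id) (fun _ _ => Nat.zero_le _) hx).trans hs))
  have hsum := h.2.2.2.2
  exact mem_product.mpr ⟨hle _ (by omega), hle _ (by omega)⟩

lemma IsRRPair.swap (h : IsRRPair a b m n p) : IsRRPair b a m n p.swap :=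
  ⟨h.2.1, h.1, h.2.2.1.symm, by simp [h.2.2.2.1.symm, add_comm],
    by simp [h.2.2.2.2.symm, add_comm]⟩

lemma card_rrPairs_comm (a b m n : ℕ) : #(rrPairs a b m n) = #(rrPairs b a m n) :=
  card_nbij' Prod.swap Prod.swap (fun _ hp => mem_rrPairs.mpr (mem_rrPairs.mp hp).swap)
    (fun _ hp => mem_rrPairs.mpr (mem_rrPairs.mp hp).swap)
    (fun p _ => p.swap_swap) (fun p _ => p.swap_swap)

lemma rrPairs_succ_left (a b m n : ℕ) :
    rrPairs (a + 1) b m n = (rrPairs a b m n).filter (fun p => a ∉ p.1) := by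
  ext p
  simp only [mem_filter, mem_rrPairs, IsRRPair, isRRColorFrom_succ_iff]
  tauto

lemma rrPairs_succ_right (a b m n : ℕ) :
    rrPairs a (b + 1) m n = (rrPairs a b m n).filter (fun p => b ∉ p.2) := by
  ext p
  simp only [mem_filter, mem_rrPairs, IsRRPair, isRRColorFrom_succ_iff]
  tauto

lemma card_rrPairs_eq_add_card_filter_mem (a b m n : ℕ) :
    #(rrPairs a b m n) =
      #(rrPairs (a + 1) b m n) + #((rrPairs a b m n).filter (fun p => a ∈ p.1)) := by
  rw [rrPairs_succ_left, add_comm]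
  exact (card_filter_add_card_filter_not _).symm

/-- Inclusion–exclusion: a part `k` cannot have both colours. -/
lemma card_rrPairs_succ_add_card_rrPairs_succ (k m n : ℕ) :
    #(rrPairs (k + 1) k m n) + #(rrPairs k (k + 1) m n) =
      #(rrPairs k k m n) + #(rrPairs (k + 1) (k + 1) m n) := by
  have hunion : (rrPairs (k + 1) k m n) ∪ rrPairs k (k + 1) m n = rrPairs k k m n := by
    rw [rrPairs_succ_left, rrPairs_succ_right, ← filter_or]
    refine filter_true_of_mem fun p hp => not_and_or.mp fun ⟨h1, h2⟩ => ?_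
    exact disjoint_left.mp (mem_rrPairs.mp hp).2.2.1 h1 h2
  have hinter : (rrPairs (k + 1) k m n) ∩ rrPairs k (k + 1) m n = rrPairs (k + 1) (k + 1) m n := by
    rw [rrPairs_succ_left, rrPairs_succ_right, rrPairs_succ_right, rrPairs_succ_left,
      filter_filter, ← filter_and]
  rw [← card_union_add_card_inter, hunion, hinter]

end rrPairs

/-- Inverse of deleting a black part `1` and lowering all other parts by one. -/
lemma isRRPair_insert_one_map_succ_iff {A B : Finset ℕ} {m n : ℕ} (hA : 0 ∉ A) :
    IsRRPair 1 1 (m + 1) (n + m + 1)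
        (insert 1 (A.map (addRightEmbedding 1)), B.map (addRightEmbedding 1)) ↔
      IsRRPair 2 1 m n (A, B) := by
  have h1A : 1 ∉ A.map (addRightEmbedding 1) := one_mem_map_succ_iff.not.mpr hA
  have hblack : IsRRColorFrom 1 (insert 1 (A.map (addRightEmbedding 1))) ↔ IsRRColorFrom 2 A := by
    rw [isRRColorFrom_insert_iff h1A, isRRColorFrom_map_succ_iff]
  have hred : IsRRColorFrom 1 (B.map (addRightEmbedding 1)) ∧
      Disjoint (insert 1 (A.map (addRightEmbedding 1))) (B.map (addRightEmbedding 1)) ↔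
      IsRRColorFrom 1 B ∧ Disjoint A B := by
    rw [disjoint_insert_left, disjoint_map, one_mem_map_succ_iff,
      isRRColorFrom_map_succ_iff (k := 0), isRRColorFrom_succ_iff (k := 0)]
    tauto
  have hsize : (insert 1 (A.map (addRightEmbedding 1))).card + (B.map (addRightEmbedding 1)).card =
        A.card + B.card + 1 ∧
      (insert 1 (A.map (addRightEmbedding 1))).sum id + (B.map (addRightEmbedding 1)).sum id =
        A.sum id + B.sum id + (A.card + B.card) + 1 := by
    rw [card_insert_of_notMem h1A, sum_insert h1A, card_map, card_map, sum_map_succ, sum_map_succ]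
    exact ⟨by omega, by simp only [id]; omega⟩
  simp only [IsRRPair, hsize.1, hsize.2]
  constructor
  · rintro ⟨h1, h2, h3, h4, h5⟩
    obtain ⟨h2, h3⟩ := hred.mp ⟨h2, h3⟩
    exact ⟨hblack.mp h1, h2, h3, by omega, by omega⟩
  · rintro ⟨h1, h2, h3, h4, h5⟩
    obtain ⟨h2, h3⟩ := hred.mpr ⟨h2, h3⟩
    exact ⟨hblack.mpr h1, h2, h3, by omega, by omega⟩

lemma card_filter_one_mem_rrPairs_succ (m n : ℕ) :
    #((rrPairs 1 1 (m + 1) (n + m + 1)).filter (fun p => 1 ∈ p.1)) = #(rrPairs 2 1 m n) := by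
  symm
  refine card_nbij
    (fun q => (insert 1 (q.1.map (addRightEmbedding 1)), q.2.map (addRightEmbedding 1)))
    (fun q hq => ?_) (fun q hq q' hq' h => ?_) (fun p hp => ?_)
  · have hq := mem_rrPairs.mp hq
    exact mem_filter.mpr ⟨mem_rrPairs.mpr
      ((isRRPair_insert_one_map_succ_iff (hq.1.notMem_of_lt two_pos)).mpr hq), mem_insert_self _ _⟩
  · have h1 : ∀ q ∈ rrPairs 2 1 m n, 1 ∉ q.1.map (addRightEmbedding 1) := fun q hq =>
      one_mem_map_succ_iff.not.mpr ((mem_rrPairs.mp hq).1.notMem_of_lt two_pos)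
    obtain ⟨hfst, hsnd⟩ := Prod.ext_iff.mp h
    refine Prod.ext (map_injective (addRightEmbedding 1) ?_) (map_injective _ hsnd)
    rw [← erase_insert (h1 q hq), ← erase_insert (h1 q' hq')]
    exact congrArg (·.erase 1) hfst
  · obtain ⟨hp, h1⟩ := mem_filter.mp hp
    have hp := mem_rrPairs.mp hp
    obtain ⟨A, hA⟩ := exists_map_succ_eq (s := p.1.erase 1)
      fun h => hp.1.notMem_of_lt one_pos (mem_of_mem_erase h)
    obtain ⟨B, hB⟩ := exists_map_succ_eq (hp.2.1.notMem_of_lt one_pos)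
    have hp_eq : (insert 1 (A.map (addRightEmbedding 1)), B.map (addRightEmbedding 1)) = p := by
      rw [hA, hB, insert_erase h1]
    have h0A : 0 ∉ A := fun h => notMem_erase 1 p.1 (hA ▸ one_mem_map_succ_iff.mpr h)
    refine ⟨(A, B), mem_rrPairs.mpr ((isRRPair_insert_one_map_succ_iff h0A).mp ?_), hp_eq⟩
    rwa [hp_eq]

lemma filter_one_mem_rrPairs_eq_empty {m n : ℕ} (h : ¬(1 ≤ m ∧ m ≤ n)) :
    (rrPairs 1 1 m n).filter (fun p => 1 ∈ p.1) = ∅ := by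
  refine filter_false_of_mem fun p hp h1 => h ?_
  obtain ⟨hA, hB, -, hcard, hsum⟩ := mem_rrPairs.mp hp
  have := card_pos.mpr ⟨1, h1⟩
  have := hA.mul_card_le_sum
  have := hB.mul_card_le_sum
  omega

lemma two_mul_card_rrPairs_two_one (m n : ℕ) :
    2 * #(rrPairs 2 1 m n) = #(rrPairs 1 1 m n) + #(rrPairs 2 2 m n) := by
  have hincl : #(rrPairs 2 1 m n) + #(rrPairs 1 2 m n) = #(rrPairs 1 1 m n) + #(rrPairs 2 2 m n) :=
    card_rrPairs_succ_add_card_rrPairs_succ 1 m n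
  rw [two_mul, ← hincl, card_rrPairs_comm 1 2]

lemma card_rrPairs_one_one (m n : ℕ) :
    #(rrPairs 1 1 m n) =
      #(rrPairs 2 2 m n) + 2 * #((rrPairs 1 1 m n).filter (fun p => 1 ∈ p.1)) := by
  have hsplit : #(rrPairs 1 1 m n) =
      #(rrPairs 2 1 m n) + #((rrPairs 1 1 m n).filter (fun p => 1 ∈ p.1)) :=
    card_rrPairs_eq_add_card_filter_mem 1 1 m n
  have := two_mul_card_rrPairs_two_one m n
  omega

lemma rRR_eq_card_rrPairs {j : ℕ} (hj : 1 ≤ j) (m n : ℕ) : rRR j m n = #(rrPairs j j m n) := by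
  rw [rRR, ← Nat.card_eq_finsetCard]
  refine Nat.card_congr (Equiv.subtypeEquivRight fun p => ?_)
  rw [mem_rrPairs, IsRRPair, isRRColorFrom_iff_isRRColor hj, isRRColorFrom_iff_isRRColor hj,
    TwoColoredRR, forall_mem_union]
  tauto

lemma rRR_one_sub_rRR_two (m n : ℕ) :
    (rRR 1 m n : ℤ) - rRR 2 m n =
      if 1 ≤ m ∧ m ≤ n then (rRR 1 (m - 1) (n - m) + rRR 2 (m - 1) (n - m) : ℤ) else 0 := by
  simp only [rRR_eq_card_rrPairs le_rfl, rRR_eq_card_rrPairs one_le_two]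
  rw [card_rrPairs_one_one]
  split_ifs with h
  · obtain ⟨m, rfl⟩ : ∃ k, m = k + 1 := ⟨m - 1, by omega⟩
    obtain ⟨n, rfl⟩ : ∃ k, n = k + m + 1 := ⟨n - m - 1, by omega⟩
    have := two_mul_card_rrPairs_two_one m n
    rw [card_filter_one_mem_rrPairs_succ, Nat.add_sub_cancel, show n + m + 1 - (m + 1) = n by omega]
    omega
  · rw [filter_one_mem_rrPairs_eq_empty h]
    simp

open MvPowerSeries in
lemma coeff_X_mul_X_mul_RgenShift (j : ℕ) (e : Fin 2 →₀ ℕ) :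
    coeff e (X (0 : Fin 2) * X 1 * RgenShift j) =
      if 1 ≤ e 0 ∧ e 0 ≤ e 1 then (rRR j (e 0 - 1) (e 1 - e 0) : ℤ) else 0 := by
  rw [X_def, X_def, monomial_mul_monomial, one_mul, coeff_monomial_mul]
  change (if _ then 1 * RgenShift j _ else 0) = _
  have hd : ∀ i : Fin 2, (Finsupp.single 0 1 + Finsupp.single 1 1 : Fin 2 →₀ ℕ) i = 1 := by
    simp [Fin.forall_fin_two]
  simp only [RgenShift, one_mul, Finsupp.le_def, Fin.forall_fin_two, Finsupp.tsub_apply, hd]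
  split_ifs <;> first | omega | (congr 2; omega)

open MvPowerSeries in
/-- The functional equation `R₁(x) - R₂(x) = xq R₁(xq) + xq R₂(xq)`. -/
theorem functional_equation :
    Rgen 1 - Rgen 2 =
      X (0 : Fin 2) * X 1 * RgenShift 1 + X (0 : Fin 2) * X 1 * RgenShift 2 := by
  ext e
  rw [map_sub, map_add, coeff_X_mul_X_mul_RgenShift, coeff_X_mul_X_mul_RgenShift]
  change (rRR 1 (e 0) (e 1) : ℤ) - rRR 2 (e 0) (e 1) = _
  rw [rRR_one_sub_rRR_two]
  split_ifs <;> simp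
end

section
/- The counting functions for 2-colored Rogers-Ramanujan partitions satisfy the recurrence r₁(m, n) - r₂(m, n) = r₁(m - 1, n - m) + r₂(m - 1, n - m) for all m, n ≥ 1. -/
def RRSet (j m n : ℕ) : Set (Finset ℕ × Finset ℕ) :=
  {p | TwoColoredRR p ∧ (∀ a ∈ p.1 ∪ p.2, j ≤ a) ∧ p.1.card + p.2.card = m ∧
    p.1.sum id + p.2.sum id = n}

lemma rRR_eq (j m n : ℕ) : rRR j m n = (RRSet j m n).ncard :=
  Nat.card_coe_set_eq _

lemma RRSet_finite (j m n : ℕ) : (RRSet j m n).Finite := by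
  apply Set.Finite.subset (((Finset.range (n+1)).powerset ×ˢ (Finset.range (n+1)).powerset).finite_toSet)
  rintro ⟨A, B⟩ ⟨_, _, _, hs⟩
  simp only [Finset.coe_product, Set.mem_prod, Finset.mem_coe, Finset.mem_powerset]
  constructor <;> intro a ha <;> rw [Finset.mem_range] <;>
    [have h1 : (id a : ℕ) ≤ A.sum id := Finset.single_le_sum (fun i _ => Nat.zero_le _) ha;
     have h1 : (id a : ℕ) ≤ B.sum id := Finset.single_le_sum (fun i _ => Nat.zero_le _) ha] <;>
    exact lt_of_le_of_lt h1 (by simp only [id_eq] at hs ⊢; omega)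

lemma card_le_sum (s : Finset ℕ) (h : ∀ a ∈ s, 1 ≤ a) : s.card ≤ s.sum id := by
  have := Finset.card_nsmul_le_sum s id 1 h
  simpa using this

lemma sum_pred_aux (s : Finset ℕ) (h : ∀ a ∈ s, 1 ≤ a) :
    (∑ a ∈ s, (a - 1)) + s.card = s.sum id := by
  classical
  induction s using Finset.induction_on with
  | empty => simp
  | @insert a s ha ih =>
    rw [Finset.sum_insert ha, Finset.sum_insert ha, Finset.card_insert_of_notMem ha]
    have h1 := h a (Finset.mem_insert_self a s)
    have h2 := ih (fun b hb => h b (Finset.mem_insert_of_mem hb))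
    simp only [id_eq] at *
    omega

lemma sum_image_pred (s : Finset ℕ) (h : ∀ a ∈ s, 1 ≤ a) :
    (s.image (fun a => a - 1)).sum id + s.card = s.sum id := by
  classical
  rw [Finset.sum_image (fun x hx y hy hxy => by have := h x hx; have := h y hy; omega)]
  exact sum_pred_aux s h

lemma card_image_pred (s : Finset ℕ) (h : ∀ a ∈ s, 1 ≤ a) :
    (s.image (fun a => a - 1)).card = s.card :=
  Finset.card_image_of_injOn (fun x hx y hy hxy => by
    have := h x hx; have := h y hy; omega)

lemma sum_image_succ (s : Finset ℕ) :
    (s.image (fun a => a + 1)).sum id = s.sum id + s.card := by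
  classical
  rw [Finset.sum_image (fun x _ y _ hxy => by omega)]
  simp only [id_eq, Finset.sum_add_distrib, Finset.sum_const, smul_eq_mul, mul_one]

lemma card_image_succ (s : Finset ℕ) :
    (s.image (fun a => a + 1)).card = s.card :=
  Finset.card_image_of_injOn (fun x _ y _ hxy => by omega)

lemma image_succ_pred (s : Finset ℕ) :
    ((s.image (fun a => a + 1)).image (fun a => a - 1)) = s := by
  classical
  ext b
  simp only [Finset.mem_image]
  constructor
  · rintro ⟨a, ⟨c, hc, rfl⟩, rfl⟩; simpa using hc
  · intro hb; exact ⟨b + 1, ⟨b, hb, rfl⟩, rfl⟩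

lemma image_pred_succ (s : Finset ℕ) (h : ∀ a ∈ s, 1 ≤ a) :
    ((s.image (fun a => a - 1)).image (fun a => a + 1)) = s := by
  classical
  ext b
  simp only [Finset.mem_image]
  constructor
  · rintro ⟨a, ⟨c, hc, rfl⟩, rfl⟩; have := h c hc; simpa [Nat.sub_add_cancel this] using hc
  · intro hb; exact ⟨b - 1, ⟨b, hb, rfl⟩, by show b - 1 + 1 = b; have := h b hb; omega⟩

lemma one_not_mem_image_succ (s : Finset ℕ) (h : ∀ a ∈ s, 1 ≤ a) :
    1 ∉ s.image (fun a => a + 1) := by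
  intro hmem
  obtain ⟨a, ha, hh⟩ := Finset.mem_image.mp hmem
  have h' : a + 1 = 1 := hh
  have := h a ha
  omega

def D1 (m n : ℕ) : Set (Finset ℕ × Finset ℕ) := {p | p ∈ RRSet 1 m n ∧ 1 ∈ p.1}
def D2 (m n : ℕ) : Set (Finset ℕ × Finset ℕ) := {p | p ∈ RRSet 1 m n ∧ 1 ∈ p.2}
def QA (m n : ℕ) : Set (Finset ℕ × Finset ℕ) := {p | p ∈ RRSet 1 m n ∧ ∀ a ∈ p.1, 2 ≤ a}
def QB (m n : ℕ) : Set (Finset ℕ × Finset ℕ) := {p | p ∈ RRSet 1 m n ∧ ∀ a ∈ p.2, 2 ≤ a}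

def fmap : Finset ℕ × Finset ℕ → Finset ℕ × Finset ℕ :=
  fun p => ((p.1.erase 1).image (fun a => a - 1), p.2.image (fun a => a - 1))

def gmap : Finset ℕ × Finset ℕ → Finset ℕ × Finset ℕ :=
  fun p => (insert 1 (p.1.image (fun a => a + 1)), p.2.image (fun a => a + 1))

lemma RRSet2_subset (m n : ℕ) : RRSet 2 m n ⊆ RRSet 1 m n := by
  rintro p ⟨h1, h2, h3, h4⟩
  exact ⟨h1, fun a ha => le_trans one_le_two (h2 a ha), h3, h4⟩

lemma diff_eq (m n : ℕ) : RRSet 1 m n \ RRSet 2 m n = D1 m n ∪ D2 m n := by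
  ext p
  constructor
  · rintro ⟨hp, hnp⟩
    by_contra hcon
    rw [Set.mem_union] at hcon
    push_neg at hcon
    apply hnp
    refine ⟨hp.1, fun a ha => ?_, hp.2.2⟩
    have h1 := hp.2.1 a ha
    rcases Nat.lt_or_ge a 2 with h2 | h2
    · have ha1 : a = 1 := by omega
      subst ha1
      rcases Finset.mem_union.mp ha with h | h
      · exact absurd ⟨hp, h⟩ hcon.1
      · exact absurd ⟨hp, h⟩ hcon.2
    · exact h2
  · rintro (⟨hp, h1⟩ | ⟨hp, h1⟩) <;>
      refine ⟨hp, fun h2 => ?_⟩ <;>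
      [have := h2.2.1 1 (Finset.mem_union_left _ h1);
       have := h2.2.1 1 (Finset.mem_union_right _ h1)] <;> omega

lemma D1_disjoint_D2 (m n : ℕ) : Disjoint (D1 m n) (D2 m n) := by
  rw [Set.disjoint_left]
  rintro p ⟨hp, h1⟩ ⟨_, h2⟩
  exact Finset.disjoint_left.mp hp.1.2.2 h1 h2

lemma mem_RRSet_swap {j m n : ℕ} {p : Finset ℕ × Finset ℕ} (hp : p ∈ RRSet j m n) :
    p.swap ∈ RRSet j m n := by
  obtain ⟨⟨h1, h2, h3⟩, hj, hc, hs⟩ := hp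
  refine ⟨⟨h2, h1, h3.symm⟩, fun a ha => ?_, by simpa [Prod.swap] using by omega, ?_⟩
  · apply hj
    rw [Finset.union_comm]
    exact ha
  · show p.2.sum id + p.1.sum id = n
    omega

lemma swap_image_D2 (m n : ℕ) : Prod.swap '' D2 m n = D1 m n := by
  ext p
  constructor
  · rintro ⟨q, ⟨hq, h1⟩, rfl⟩
    exact ⟨mem_RRSet_swap hq, h1⟩
  · rintro ⟨hp, h1⟩
    exact ⟨p.swap, ⟨mem_RRSet_swap hp, h1⟩, Prod.swap_swap p⟩

lemma swap_image_QB (m n : ℕ) : Prod.swap '' QB m n = QA m n := by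
  ext p
  constructor
  · rintro ⟨q, ⟨hq, h1⟩, rfl⟩
    exact ⟨mem_RRSet_swap hq, h1⟩
  · rintro ⟨hp, h1⟩
    exact ⟨p.swap, ⟨mem_RRSet_swap hp, h1⟩, Prod.swap_swap p⟩

lemma QA_union_QB (m n : ℕ) : QA m n ∪ QB m n = RRSet 1 m n := by
  ext p
  constructor
  · rintro (⟨hp, _⟩ | ⟨hp, _⟩) <;> exact hp
  · intro hp
    by_cases h : ∀ a ∈ p.1, 2 ≤ a
    · exact Or.inl ⟨hp, h⟩
    · push_neg at h
      obtain ⟨a, ha, ha2⟩ := h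
      have ha1 : 1 ≤ a := hp.2.1 a (Finset.mem_union_left _ ha)
      have ha1' : a = 1 := by omega
      subst ha1'
      refine Or.inr ⟨hp, fun b hb => ?_⟩
      have hb1 : 1 ≤ b := hp.2.1 b (Finset.mem_union_right _ hb)
      have hbne : b ≠ 1 := fun h => Finset.disjoint_left.mp hp.1.2.2 ha (h ▸ hb)
      omega

lemma QA_inter_QB (m n : ℕ) : QA m n ∩ QB m n = RRSet 2 m n := by
  ext p
  constructor
  · rintro ⟨⟨hp, h1⟩, ⟨_, h2⟩⟩
    refine ⟨hp.1, fun a ha => ?_, hp.2.2⟩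
    rcases Finset.mem_union.mp ha with h | h
    · exact h1 a h
    · exact h2 a h
  · intro hp
    have hp1 := RRSet2_subset m n hp
    exact ⟨⟨hp1, fun a ha => hp.2.1 a (Finset.mem_union_left _ ha)⟩,
           ⟨hp1, fun a ha => hp.2.1 a (Finset.mem_union_right _ ha)⟩⟩

lemma gmap_fmap {m n : ℕ} {p : Finset ℕ × Finset ℕ} (hp : p ∈ D1 m n) :
    gmap (fmap p) = p := by
  obtain ⟨⟨⟨⟨hA1, _⟩, ⟨hB1, _⟩, _⟩, _, _, _⟩, h1A⟩ := hp
  show (insert 1 (((p.1.erase 1).image _).image _), ((p.2.image _).image _)) = p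
  rw [image_pred_succ _ (fun a ha => hA1 a (Finset.mem_of_mem_erase ha)),
      image_pred_succ _ hB1, Finset.insert_erase h1A]

lemma injOn_fmap (m n : ℕ) : Set.InjOn fmap (D1 m n) := by
  intro p hp q hq h
  rw [← gmap_fmap hp, ← gmap_fmap hq, h]

lemma image_fmap (m n : ℕ) (hm : 1 ≤ m) (hmn : m ≤ n) :
    fmap '' D1 m n = QA (m - 1) (n - m) := by
  ext q
  constructor
  · rintro ⟨⟨A, B⟩, ⟨⟨⟨⟨hA1, hA2⟩, ⟨hB1, hB2⟩, hAB⟩, hj, hc, hs⟩, h1A⟩, rfl⟩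
    have hc' : A.card + B.card = m := hc
    have hs' : A.sum id + B.sum id = n := hs
    have h1A' : 1 ∈ A := h1A
    clear hc hs h1A
    have hA3 : ∀ a ∈ A.erase 1, 3 ≤ a := by
      intro a ha
      obtain ⟨hne, haA⟩ := Finset.mem_erase.mp ha
      have hg := hA2 a haA 1 h1A' hne
      have := hA1 a haA
      omega
    have hB2' : ∀ b ∈ B, 2 ≤ b := by
      intro b hb
      have h1 := hB1 b hb
      have : b ≠ 1 := fun h => Finset.disjoint_left.mp hAB h1A' (h ▸ hb)
      omega
    show ((A.erase 1).image (fun a => a - 1), B.image (fun a => a - 1)) ∈ QA (m-1) (n-m)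
    have hA'2 : ∀ x ∈ (A.erase 1).image (fun a => a - 1), 2 ≤ x := by
      intro x hx
      obtain ⟨a, ha, hae⟩ := Finset.mem_image.mp hx
      have hae' : a - 1 = x := hae
      have := hA3 a ha
      omega
    have hB'1 : ∀ x ∈ B.image (fun a => a - 1), 1 ≤ x := by
      intro x hx
      obtain ⟨b, hb, hbe⟩ := Finset.mem_image.mp hx
      have hbe' : b - 1 = x := hbe
      have := hB2' b hb
      omega
    have hA'gap : ∀ x ∈ (A.erase 1).image (fun a => a - 1),
        ∀ y ∈ (A.erase 1).image (fun a => a - 1), x ≠ y → 2 ≤ max x y - min x y := by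
      intro x hx y hy hne
      obtain ⟨a, ha, hae⟩ := Finset.mem_image.mp hx
      obtain ⟨b, hb, hbe⟩ := Finset.mem_image.mp hy
      have hae' : a - 1 = x := hae
      have hbe' : b - 1 = y := hbe
      have h3a := hA3 a ha
      have h3b := hA3 b hb
      have hane : a ≠ b := by omega
      have hg := hA2 a (Finset.mem_of_mem_erase ha) b (Finset.mem_of_mem_erase hb) hane
      omega
    have hB'gap : ∀ x ∈ B.image (fun a => a - 1),
        ∀ y ∈ B.image (fun a => a - 1), x ≠ y → 2 ≤ max x y - min x y := by
      intro x hx y hy hne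
      obtain ⟨a, ha, hae⟩ := Finset.mem_image.mp hx
      obtain ⟨b, hb, hbe⟩ := Finset.mem_image.mp hy
      have hae' : a - 1 = x := hae
      have hbe' : b - 1 = y := hbe
      have h2a := hB2' a ha
      have h2b := hB2' b hb
      have hane : a ≠ b := by omega
      have hg := hB2 a ha b hb hane
      omega
    have hdisj : Disjoint ((A.erase 1).image (fun a => a - 1)) (B.image (fun a => a - 1)) := by
      rw [Finset.disjoint_left]
      intro x hx hy
      obtain ⟨a, ha, hae⟩ := Finset.mem_image.mp hx
      obtain ⟨b, hb, hbe⟩ := Finset.mem_image.mp hy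
      have hae' : a - 1 = x := hae
      have hbe' : b - 1 = x := hbe
      have h3a := hA3 a ha
      have h2b := hB2' b hb
      have hab : a = b := by omega
      exact Finset.disjoint_left.mp hAB (Finset.mem_of_mem_erase ha) (hab ▸ hb)
    have hApos : 1 ≤ A.card := Finset.card_pos.mpr ⟨1, h1A'⟩
    have hcA' : ((A.erase 1).image (fun a => a - 1)).card = A.card - 1 := by
      rw [card_image_pred _ (fun a ha => by have := hA3 a ha; omega)]
      exact Finset.card_erase_of_mem h1A'
    have hcB' : (B.image (fun a => a - 1)).card = B.card :=
      card_image_pred _ hB1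
    have hsA' : ((A.erase 1).image (fun a => a - 1)).sum id + (A.erase 1).card
        = (A.erase 1).sum id := sum_image_pred _ (fun a ha => by have := hA3 a ha; omega)
    have hsA : (A.erase 1).sum id + 1 = A.sum id := Finset.sum_erase_add A id h1A'
    have hce : (A.erase 1).card = A.card - 1 := Finset.card_erase_of_mem h1A'
    have hsB' : (B.image (fun a => a - 1)).sum id + B.card = B.sum id :=
      sum_image_pred _ hB1
    refine ⟨⟨⟨⟨fun x hx => by have := hA'2 x hx; omega, hA'gap⟩, ⟨hB'1, hB'gap⟩, hdisj⟩,
      fun x hx => ?_,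
      by show ((A.erase 1).image (fun a => a - 1)).card + (B.image (fun a => a - 1)).card = m - 1
         omega,
      by show ((A.erase 1).image (fun a => a - 1)).sum id + (B.image (fun a => a - 1)).sum id
            = n - m
         omega⟩, hA'2⟩
    rcases Finset.mem_union.mp hx with h | h
    · have := hA'2 x h; omega
    · exact hB'1 x h
  · rintro ⟨⟨⟨⟨hA1, hA2⟩, ⟨hB1, hB2⟩, hAB⟩, hj, hc, hs⟩, hA2'⟩
    obtain ⟨A, B⟩ := q
    simp only at hA1 hA2 hB1 hB2 hAB hj hc hs hA2'
    refine ⟨gmap (A, B), ⟨?_, Finset.mem_insert_self 1 _⟩, ?_⟩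
    · have h1nA : 1 ∉ A.image (fun a => a + 1) := one_not_mem_image_succ A hA1
      have hmemP1 : ∀ x ∈ insert 1 (A.image (fun a => a + 1)), x = 1 ∨ ∃ a ∈ A, a + 1 = x := by
        intro x hx
        rcases Finset.mem_insert.mp hx with h | h
        · exact Or.inl h
        · exact Or.inr (Finset.mem_image.mp h)
      have hmemP2 : ∀ x ∈ B.image (fun a => a + 1), ∃ b ∈ B, b + 1 = x := by
        intro x hx; exact Finset.mem_image.mp hx
      refine ⟨⟨⟨?_, ?_⟩, ⟨?_, ?_⟩, ?_⟩, ?_, ?_, ?_⟩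
      · intro x hx
        rcases hmemP1 x hx with h | ⟨a, _, h⟩ <;> omega
      · intro x hx y hy hne
        rcases hmemP1 x hx with hx1 | ⟨a, ha, hae⟩ <;> rcases hmemP1 y hy with hy1 | ⟨b, hb, hbe⟩
        · exact absurd (hx1.trans hy1.symm) hne
        · have := hA2' b hb; omega
        · have := hA2' a ha; omega
        · have h2a := hA2' a ha
          have h2b := hA2' b hb
          have hane : a ≠ b := by omega
          have hg := hA2 a ha b hb hane
          omega
      · intro x hx
        obtain ⟨b, _, h⟩ := hmemP2 x hx; omega
      · intro x hx y hy hne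
        obtain ⟨a, ha, hae⟩ := hmemP2 x hx
        obtain ⟨b, hb, hbe⟩ := hmemP2 y hy
        have h1a := hB1 a ha
        have h1b := hB1 b hb
        have hane : a ≠ b := by omega
        have hg := hB2 a ha b hb hane
        omega
      · rw [Finset.disjoint_left]
        intro x hx hy
        obtain ⟨b, hb, hbe⟩ := hmemP2 x hy
        have h1b := hB1 b hb
        rcases hmemP1 x hx with h | ⟨a, ha, hae⟩
        · omega
        · have hab : a = b := by omega
          exact Finset.disjoint_left.mp hAB ha (hab ▸ hb)
      · intro x hx
        rcases Finset.mem_union.mp hx with h | h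
        · rcases hmemP1 x h with h1 | ⟨a, _, h1⟩ <;> omega
        · obtain ⟨b, _, h1⟩ := hmemP2 x h; omega
      · show (insert 1 (A.image (fun a => a + 1))).card + (B.image (fun a => a + 1)).card = m
        rw [Finset.card_insert_of_notMem h1nA, card_image_succ, card_image_succ]
        omega
      · show (insert 1 (A.image (fun a => a + 1))).sum id + (B.image (fun a => a + 1)).sum id = n
        rw [Finset.sum_insert h1nA, sum_image_succ, sum_image_succ]
        have : (id 1 : ℕ) = 1 := rfl
        omega
    · show (((insert 1 (A.image (fun a => a + 1))).erase 1).image (fun a => a - 1),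
        (B.image (fun a => a + 1)).image (fun a => a - 1)) = (A, B)
      rw [Finset.erase_insert (one_not_mem_image_succ A hA1), image_succ_pred, image_succ_pred]

lemma RRSet1_empty_of_lt (m n : ℕ) (h : n < m) : RRSet 1 m n = ∅ := by
  ext p
  simp only [Set.mem_empty_iff_false, iff_false]
  rintro ⟨⟨⟨hA1, _⟩, ⟨hB1, _⟩, _⟩, hj, hc, hs⟩
  have h1 := card_le_sum p.1 hA1
  have h2 := card_le_sum p.2 hB1
  omega

/-- The recurrence `r₁(m,n) - r₂(m,n) = r₁(m-1, n-m) + r₂(m-1, n-m)` for `m, n ≥ 1`. -/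
theorem rRR_recurrence (m n : ℕ) (hm : 1 ≤ m) (hn : 1 ≤ n) :
    (rRR 1 m n : ℤ) - rRR 2 m n = rRR 1 (m - 1) (n - m) + rRR 2 (m - 1) (n - m) := by
  rcases le_or_gt m n with hmn | hmn
  · have hfin1 := RRSet_finite 1 m n
    have hfin2 : (RRSet 2 m n).Finite := hfin1.subset (RRSet2_subset m n)
    have hfin1' := RRSet_finite 1 (m - 1) (n - m)
    have hfin2' : (RRSet 2 (m - 1) (n - m)).Finite := hfin1'.subset (RRSet2_subset _ _)
    have hfinQA : (QA (m - 1) (n - m)).Finite := hfin1'.subset (fun p hp => hp.1)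
    have hfinQB : (QB (m - 1) (n - m)).Finite := hfin1'.subset (fun p hp => hp.1)
    have hfinD1 : (D1 m n).Finite := hfin1.subset (fun p hp => hp.1)
    have hfinD2 : (D2 m n).Finite := hfin1.subset (fun p hp => hp.1)
    have e1 : (RRSet 1 m n \ RRSet 2 m n).ncard
        = (RRSet 1 m n).ncard - (RRSet 2 m n).ncard :=
      Set.ncard_diff (RRSet2_subset m n) hfin2
    have e2 : (RRSet 2 m n).ncard ≤ (RRSet 1 m n).ncard :=
      Set.ncard_le_ncard (RRSet2_subset m n) hfin1
    have e3 : (RRSet 1 m n \ RRSet 2 m n).ncard = (D1 m n).ncard + (D2 m n).ncard := by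
      rw [diff_eq]
      exact Set.ncard_union_eq (D1_disjoint_D2 m n) hfinD1 hfinD2
    have e4 : (QA (m - 1) (n - m)).ncard = (D1 m n).ncard := by
      rw [← image_fmap m n hm hmn]
      exact Set.ncard_image_of_injOn (injOn_fmap m n)
    have e5 : (D2 m n).ncard = (D1 m n).ncard := by
      calc (D2 m n).ncard = (Prod.swap '' D2 m n).ncard :=
            (Set.ncard_image_of_injOn (Prod.swap_injective.injOn)).symm
        _ = (D1 m n).ncard := by rw [swap_image_D2]
    have e6 : (QB (m - 1) (n - m)).ncard = (QA (m - 1) (n - m)).ncard := by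
      calc (QB (m - 1) (n - m)).ncard = (Prod.swap '' QB (m - 1) (n - m)).ncard :=
            (Set.ncard_image_of_injOn (Prod.swap_injective.injOn)).symm
        _ = (QA (m - 1) (n - m)).ncard := by rw [swap_image_QB]
    have e7 : (RRSet 1 (m - 1) (n - m)).ncard + (RRSet 2 (m - 1) (n - m)).ncard
        = (QA (m - 1) (n - m)).ncard + (QB (m - 1) (n - m)).ncard := by
      rw [← QA_union_QB, ← QA_inter_QB]
      exact Set.ncard_union_add_ncard_inter _ _ hfinQA hfinQB
    rw [rRR_eq, rRR_eq, rRR_eq, rRR_eq]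
    omega
  · have h1 : RRSet 1 m n = ∅ := RRSet1_empty_of_lt m n hmn
    have h2 : RRSet 2 m n = ∅ :=
      Set.eq_empty_of_subset_empty (h1 ▸ RRSet2_subset m n)
    have hnm0 : n - m = 0 := by omega
    have h3 : RRSet 1 (m - 1) (n - m) = ∅ := by
      rw [hnm0]
      exact RRSet1_empty_of_lt (m - 1) 0 (by omega)
    have h4 : RRSet 2 (m - 1) (n - m) = ∅ :=
      Set.eq_empty_of_subset_empty (h3 ▸ RRSet2_subset _ _)
    rw [rRR_eq, rRR_eq, rRR_eq, rRR_eq, h1, h2, h3, h4, Set.ncard_empty]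
    simp
end

section
/- There is a bijection between 2-colored Rogers-Ramanujan partitions of n and overpartitions of n into parts d₁ ≥ d₂ ≥ ⋯ ≥ d_s (where 1 may occur as a non-overlined part at most once) satisfying d_j - d_{j+1} ≥ 1 if d_j is overlined and d_j - d_{j+1} ≥ 2 otherwise; hence the two counting functions agree for every n. -/
/-- An overpartition of the kind counted by `D_{2,2}(n)`: all parts positive and
distinct (recorded by the finset `P`), `O ⊆ P` is the set of overlined parts, and
whenever a part `d` is not overlined, `d - 1` is not a part (so consecutive parts
in decreasing order satisfy `d_j - d_{j+1} ≥ 2` unless `d_j` is overlined, in which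
case `d_j - d_{j+1} ≥ 1`); `1` occurs as a non-overlined part at most once. -/
def OverpartitionD22 (P O : Finset ℕ) : Prop :=
  O ⊆ P ∧ (∀ a ∈ P, 1 ≤ a) ∧ ∀ d ∈ P, d ∉ O → d - 1 ∉ P

/-- The "color" of a part `d` of `P`, reconstructed from the overline data `O`:
alternate along runs of consecutive parts, start a run according to `O`. -/
def cfun (P O : Finset ℕ) : ℕ → Bool
  | 0 => decide (0 ∈ O)
  | d + 1 => if d ∈ P then !(cfun P O d) else decide (d + 1 ∈ O)

lemma cfun_succ_mem {P O : Finset ℕ} {d : ℕ} (h : d ∈ P) :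
    cfun P O (d + 1) = !(cfun P O d) := by simp [cfun, h]

lemma cfun_succ_not_mem {P O : Finset ℕ} {d : ℕ} (h : d ∉ P) :
    cfun P O (d + 1) = decide (d + 1 ∈ O) := by simp [cfun, h]

/-- Forward map: merge colors, overline forced parts and red parts. -/
def fwd (A B : Finset ℕ) : Finset ℕ × Finset ℕ :=
  (A ∪ B, (A ∪ B).filter (fun d => d - 1 ∈ A ∪ B ∨ d ∈ B))

/-- Backward map: split according to the reconstructed color. -/
def bwd (P O : Finset ℕ) : Finset ℕ × Finset ℕ :=
  (P.filter (fun d => cfun P O d = false), P.filter (fun d => cfun P O d = true))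

lemma noadj {C : Finset ℕ} (h : IsRRColor C) {d : ℕ} (hd : d ∈ C) : d + 1 ∉ C := by
  intro hd1
  have := h.2 d hd (d + 1) hd1 (by omega)
  rw [Nat.max_eq_right (Nat.le_succ d), Nat.min_eq_left (Nat.le_succ d)] at this
  omega

lemma adj_colors {A B : Finset ℕ} (h : TwoColoredRR (A, B)) {d : ℕ}
    (hd : d ∈ A ∪ B) (hd1 : d + 1 ∈ A ∪ B) : (d + 1 ∈ B ↔ d ∉ B) := by
  obtain ⟨hA, hB, hdis⟩ := h
  constructor
  · intro h1 h0
    exact noadj hB h0 h1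
  · intro h0
    rcases Finset.mem_union.mp hd with hdA | hdB
    · rcases Finset.mem_union.mp hd1 with h1A | h1B
      · exact absurd h1A (noadj hA hdA)
      · exact h1B
    · exact absurd hdB h0

lemma cfun_fwd {A B : Finset ℕ} (h : TwoColoredRR (A, B)) :
    ∀ d ∈ A ∪ B, cfun (A ∪ B) ((A ∪ B).filter (fun x => x - 1 ∈ A ∪ B ∨ x ∈ B)) d
      = decide (d ∈ B) := by
  intro d
  induction d with
  | zero =>
    intro h0
    rcases Finset.mem_union.mp h0 with h0 | h0
    · exact absurd (h.1.1 0 h0) (by omega)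
    · exact absurd (h.2.1.1 0 h0) (by omega)
  | succ e ih =>
    intro hmem
    by_cases he : e ∈ A ∪ B
    · rw [cfun_succ_mem he, ih he]
      have h2 := adj_colors h he hmem
      by_cases hb : e ∈ B <;> simp [h2, hb]
    · rw [cfun_succ_not_mem he]
      have : (e + 1 ∈ (A ∪ B).filter (fun x => x - 1 ∈ A ∪ B ∨ x ∈ B)) ↔ e + 1 ∈ B := by
        simp only [Finset.mem_filter, Nat.add_sub_cancel]
        constructor
        · rintro ⟨-, h1 | h1⟩
          · exact absurd h1 he
          · exact h1
        · intro h1; exact ⟨hmem, Or.inr h1⟩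
      exact decide_eq_decide.mpr this

lemma cfun_key {P O : Finset ℕ} (h : OverpartitionD22 P O) :
    ∀ d ∈ P, ((d - 1 ∈ P ∨ cfun P O d = true) ↔ d ∈ O) := by
  intro d hd
  obtain ⟨e, rfl⟩ : ∃ e, d = e + 1 := ⟨d - 1, by have := h.2.1 d hd; omega⟩
  by_cases he : e ∈ P
  · constructor
    · intro _
      by_contra hO
      exact (h.2.2 _ hd hO) (by simpa using he)
    · intro _; left; simpa using he
  · rw [cfun_succ_not_mem he]
    simp only [Nat.add_sub_cancel]
    constructor
    · rintro (h1 | h1)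
      · exact absurd h1 he
      · simpa using h1
    · intro h1; right; simpa using h1

lemma gap_same_color {P O : Finset ℕ} {a b : ℕ} (ha : a ∈ P) (hb : b ∈ P) (hab : a ≠ b)
    (hc : cfun P O a = cfun P O b) : 2 ≤ max a b - min a b := by
  have key : ∀ x y, x ∈ P → y ∈ P → x < y → cfun P O x = cfun P O y → 2 ≤ y - x := by
    intro x y hx hy hxy hcc
    by_contra hlt
    have : y = x + 1 := by omega
    subst this
    rw [cfun_succ_mem hx] at hcc
    cases hxx : cfun P O x <;> simp [hxx] at hcc
  rcases Nat.lt_or_ge a b with hlt | hge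
  · rw [Nat.max_eq_right hlt.le, Nat.min_eq_left hlt.le]
    exact key a b ha hb hlt hc
  · have hlt : b < a := lt_of_le_of_ne hge (Ne.symm hab)
    rw [Nat.max_eq_left hlt.le, Nat.min_eq_right hlt.le]
    exact key b a hb ha hlt hc.symm

lemma bwd_rr {P O : Finset ℕ} (h : OverpartitionD22 P O) :
    TwoColoredRR (bwd P O) := by
  obtain ⟨hOP, hpos, hcond⟩ := h
  refine ⟨⟨?_, ?_⟩, ⟨?_, ?_⟩, ?_⟩
  · intro a ha; exact hpos a (Finset.mem_filter.mp ha).1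
  · intro a ha b hb hab
    obtain ⟨ha, ha'⟩ := Finset.mem_filter.mp ha
    obtain ⟨hb, hb'⟩ := Finset.mem_filter.mp hb
    exact gap_same_color ha hb hab (ha'.trans hb'.symm)
  · intro a ha; exact hpos a (Finset.mem_filter.mp ha).1
  · intro a ha b hb hab
    obtain ⟨ha, ha'⟩ := Finset.mem_filter.mp ha
    obtain ⟨hb, hb'⟩ := Finset.mem_filter.mp hb
    exact gap_same_color ha hb hab (ha'.trans hb'.symm)
  · rw [Finset.disjoint_left]
    intro a ha hb
    obtain ⟨-, ha'⟩ := Finset.mem_filter.mp ha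
    obtain ⟨-, hb'⟩ := Finset.mem_filter.mp hb
    rw [ha'] at hb'; exact absurd hb' (by simp)

lemma fwd_over {A B : Finset ℕ} (h : TwoColoredRR (A, B)) :
    OverpartitionD22 (fwd A B).1 (fwd A B).2 := by
  refine ⟨Finset.filter_subset _ _, ?_, ?_⟩
  · intro a ha
    rcases Finset.mem_union.mp ha with ha | ha
    · exact h.1.1 a ha
    · exact h.2.1.1 a ha
  · intro d hd hO h1
    exact hO (Finset.mem_filter.mpr ⟨hd, Or.inl h1⟩)

lemma bwd_union {P O : Finset ℕ} : (bwd P O).1 ∪ (bwd P O).2 = P := by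
  ext x
  simp only [bwd, Finset.mem_union, Finset.mem_filter]
  cases h : cfun P O x <;> simp [h]

lemma bwd_fwd {A B : Finset ℕ} (h : TwoColoredRR (A, B)) :
    bwd (fwd A B).1 (fwd A B).2 = (A, B) := by
  have key := cfun_fwd h
  have hdis := h.2.2
  unfold fwd bwd
  simp only
  refine Prod.ext ?_ ?_ <;> simp only
  · ext x
    rw [Finset.mem_filter]
    constructor
    · rintro ⟨hx, hc⟩
      rw [key x hx] at hc
      have hxB : x ∉ B := by simpa using hc
      rcases Finset.mem_union.mp hx with hx | hx
      · exact hx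
      · exact absurd hx hxB
    · intro hx
      have hxu : x ∈ A ∪ B := Finset.mem_union.mpr (Or.inl hx)
      refine ⟨hxu, ?_⟩
      rw [key x hxu]
      simpa using Finset.disjoint_left.mp hdis hx
  · ext x
    rw [Finset.mem_filter]
    constructor
    · rintro ⟨hx, hc⟩
      rw [key x hx] at hc
      simpa using hc
    · intro hx
      have hxu : x ∈ A ∪ B := Finset.mem_union.mpr (Or.inr hx)
      refine ⟨hxu, ?_⟩
      rw [key x hxu]
      simpa using hx

lemma fwd_bwd {P O : Finset ℕ} (h : OverpartitionD22 P O) :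
    fwd (bwd P O).1 (bwd P O).2 = (P, O) := by
  have hP : (bwd P O).1 ∪ (bwd P O).2 = P := bwd_union
  have key := cfun_key h
  unfold fwd
  rw [hP]
  refine Prod.ext rfl ?_
  simp only
  ext x
  simp only [Finset.mem_filter, bwd, Finset.mem_filter]
  constructor
  · rintro ⟨hx, hc⟩
    refine (key x hx).mp ?_
    rcases hc with hc | hc
    · exact Or.inl hc
    · exact Or.inr hc.2
  · intro hx
    have hxP : x ∈ P := h.1 hx
    refine ⟨hxP, ?_⟩
    rcases (key x hxP).mpr hx with hc | hc
    · exact Or.inl hc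
    · exact Or.inr ⟨hxP, hc⟩

lemma bwd_disjoint {P O : Finset ℕ} : Disjoint (bwd P O).1 (bwd P O).2 := by
  rw [Finset.disjoint_left]
  intro a ha hb
  obtain ⟨-, ha'⟩ := Finset.mem_filter.mp ha
  obtain ⟨-, hb'⟩ := Finset.mem_filter.mp hb
  rw [ha'] at hb'; exact absurd hb' (by simp)

/-- There is a bijection between 2-colored Rogers-Ramanujan partitions of `n` and the
overpartitions of `n` counted by `D_{2,2}(n)`; hence the counts agree for every `n`. -/
theorem twoColoredRR_equiv_overpartition (n : ℕ) :
    Nonempty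
      ({p : Finset ℕ × Finset ℕ // TwoColoredRR p ∧ p.1.sum id + p.2.sum id = n} ≃
        {po : Finset ℕ × Finset ℕ // OverpartitionD22 po.1 po.2 ∧ po.1.sum id = n}) ∧
    Nat.card {p : Finset ℕ × Finset ℕ // TwoColoredRR p ∧ p.1.sum id + p.2.sum id = n} =
      Nat.card {po : Finset ℕ × Finset ℕ // OverpartitionD22 po.1 po.2 ∧ po.1.sum id = n} := by
  have e : {p : Finset ℕ × Finset ℕ // TwoColoredRR p ∧ p.1.sum id + p.2.sum id = n} ≃
      {po : Finset ℕ × Finset ℕ // OverpartitionD22 po.1 po.2 ∧ po.1.sum id = n} :=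
    { toFun := fun x => ⟨fwd x.1.1 x.1.2,
        fwd_over (by rcases x with ⟨⟨A, B⟩, hp, hs⟩; exact hp), by
          rcases x with ⟨⟨A, B⟩, hp, hs⟩
          show (A ∪ B).sum id = n
          rw [Finset.sum_union hp.2.2]; exact hs⟩
      invFun := fun x => ⟨bwd x.1.1 x.1.2,
        bwd_rr (by rcases x with ⟨⟨P, O⟩, hp, hs⟩; exact hp), by
          rcases x with ⟨⟨P, O⟩, hp, hs⟩
          have h1 : ((bwd P O).1 ∪ (bwd P O).2).sum id = (bwd P O).1.sum id + (bwd P O).2.sum id :=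
            Finset.sum_union bwd_disjoint
          rw [bwd_union] at h1
          rw [← h1]; exact hs⟩
      left_inv := fun x => by
        rcases x with ⟨⟨A, B⟩, hp, hs⟩
        exact Subtype.ext (bwd_fwd hp)
      right_inv := fun x => by
        rcases x with ⟨⟨P, O⟩, hp, hs⟩
        exact Subtype.ext (fwd_bwd hp) }
  exact ⟨⟨e⟩, Nat.card_congr e⟩
end
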